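/- arXiv:1905.00166 — 7 statements merged into one kernel-verified Lean document; each statement's English description precedes it below -/
import Mathlib

section
/- (Barker–Carlson) For every positive integer n, DD_n = cone(U_{n,2}), i.e., a symmetric n×n real matrix is diagonally dominant if and only if it is a finite nonnegative linear combination of matrices uuᵀ where u ∈ ℝⁿ has at most 2 nonzero entries, each equal to 1 or −1. -/
open Matrix Finset

noncomputable section

/-- `e i` is the standard basis vector with a `1` in coordinate `i`. -/
def e {n : ℕ} (i : Fin n) : Fin n → ℝ := Pi.single i 1

/-- The positive semidefinite cone `S^n_+`. -/
def PSDcone (n : ℕ) : Set (Matrix (Fin n) (Fin n) ℝ) :=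
  {X | X.IsSymm ∧ ∀ d : Fin n → ℝ, 0 ≤ d ⬝ᵥ X.mulVec d}

/-- The set of diagonally dominant symmetric matrices `DD_n`. -/
def DD (n : ℕ) : Set (Matrix (Fin n) (Fin n) ℝ) :=
  {A | A.IsSymm ∧ ∀ i, ∑ j ∈ Finset.univ.erase i, |A i j| ≤ A i i}

/-- The set of scaled diagonally dominant symmetric matrices `SDD_n`. -/
def SDD (n : ℕ) : Set (Matrix (Fin n) (Fin n) ℝ) :=
  {A | A.IsSymm ∧ ∃ D : Fin n → ℝ, (∀ i, 0 < D i) ∧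
    Matrix.diagonal D * A * Matrix.diagonal D ∈ DD n}

/-- The conical hull of a set of matrices. -/
def coneHull {n : ℕ} (K : Set (Matrix (Fin n) (Fin n) ℝ)) :
    Set (Matrix (Fin n) (Fin n) ℝ) :=
  {X | ∃ (k : ℕ) (c : Fin k → ℝ) (M : Fin k → Matrix (Fin n) (Fin n) ℝ),
    (∀ i, 0 ≤ c i) ∧ (∀ i, M i ∈ K) ∧ X = ∑ i, c i • M i}

/-- The dual cone within `S^n` w.r.t. the trace inner product. -/
def dualCone {n : ℕ} (K : Set (Matrix (Fin n) (Fin n) ℝ)) :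
    Set (Matrix (Fin n) (Fin n) ℝ) :=
  {A | A.IsSymm ∧ ∀ B ∈ K, 0 ≤ Matrix.trace (Aᵀ * B)}

/-- The SD basis of Type I, as a set. -/
def Bplus (n : ℕ) : Set (Matrix (Fin n) (Fin n) ℝ) :=
  {M | ∃ i j : Fin n, i ≤ j ∧ M = vecMulVec (e i + e j) (e i + e j)}

/-- The SD basis of Type II, as a set. -/
def Bminus (n : ℕ) : Set (Matrix (Fin n) (Fin n) ℝ) :=
  {M | ∃ i : Fin n, M = vecMulVec (e i + e i) (e i + e i)} ∪
    {M | ∃ i j : Fin n, i < j ∧ M = vecMulVec (e i - e j) (e i - e j)}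

/-- The expanded SD basis matrix `B̄_{i,j}(α) = (e_i + α e_j)(e_i + α e_j)ᵀ`. -/
def Bbar {n : ℕ} (α : ℝ) (i j : Fin n) : Matrix (Fin n) (Fin n) ℝ :=
  vecMulVec (e i + α • e j) (e i + α • e j)

/-- The expanded SD basis `B̄(α)`, as a set. -/
def BbarSet (n : ℕ) (α : ℝ) : Set (Matrix (Fin n) (Fin n) ℝ) :=
  {M | ∃ i j : Fin n, i ≤ j ∧ M = Bbar α i j}

/-- The space `S^n` of symmetric matrices as a submodule. -/
def symmSubmodule (n : ℕ) : Submodule ℝ (Matrix (Fin n) (Fin n) ℝ) where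
  carrier := {A | A.IsSymm}
  add_mem' := fun {A B} hA hB => by
    simp only [Set.mem_setOf_eq, Matrix.IsSymm, Matrix.transpose_add] at *
    rw [hA, hB]
  zero_mem' := by simp [Matrix.IsSymm]
  smul_mem' := fun c A hA => by
    simp only [Set.mem_setOf_eq, Matrix.IsSymm, Matrix.transpose_smul] at *
    rw [hA]

/-- Index set for pairs `1 ≤ i ≤ j ≤ n`. -/
abbrev SymIdx (n : ℕ) := {p : Fin n × Fin n // p.1 ≤ p.2}


/-- `U_{n,2}`: matrices `uuᵀ` where `u` has at most 2 nonzero entries, each `±1`. -/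
def U2 (n : ℕ) : Set (Matrix (Fin n) (Fin n) ℝ) :=
  {M | ∃ u : Fin n → ℝ,
    (Finset.univ.filter fun i => u i ≠ 0).card ≤ 2 ∧
    (∀ i, u i ≠ 0 → u i = 1 ∨ u i = -1) ∧
    M = vecMulVec u u}


/-! ### Auxiliary definitions and lemmas for the Barker–Carlson theorem -/

lemma e_apply {n : ℕ} (i p : Fin n) : e i p = if p = i then 1 else 0 := by
  simp [e, Pi.single_apply]

/-- Sign of a real number (with `sg 0 = 1`). -/
def sg (x : ℝ) : ℝ := if 0 ≤ x then 1 else -1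

lemma abs_mul_sg (x : ℝ) : |x| * sg x = x := by
  unfold sg
  split
  · rw [abs_of_nonneg ‹_›, mul_one]
  · rw [abs_of_neg (lt_of_not_ge ‹_›)]; ring

lemma sg_sq (x : ℝ) : sg x * sg x = 1 := by
  unfold sg; split <;> norm_num

lemma sg_pm (x : ℝ) : sg x = 1 ∨ sg x = -1 := by
  unfold sg; split <;> simp

/-- The vector `e i + sg (A i j) • e j` used in the decomposition. -/
def BCu {n : ℕ} (A : Matrix (Fin n) (Fin n) ℝ) (i j : Fin n) : Fin n → ℝ :=
  e i + sg (A i j) • e j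

lemma BCu_apply {n : ℕ} (A : Matrix (Fin n) (Fin n) ℝ) (i j p : Fin n) :
    BCu A i j p = (if p = i then 1 else 0) + sg (A i j) * (if p = j then 1 else 0) := by
  simp [BCu, e_apply]

lemma BCu_eq_one {n : ℕ} (A : Matrix (Fin n) (Fin n) ℝ) {i j p : Fin n}
    (hpi : p = i) (hpj : p ≠ j) : BCu A i j p = 1 := by
  rw [BCu_apply, if_pos hpi, if_neg hpj]; ring

lemma BCu_eq_sg {n : ℕ} (A : Matrix (Fin n) (Fin n) ℝ) {i j p : Fin n}
    (hpi : p ≠ i) (hpj : p = j) : BCu A i j p = sg (A i j) := by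
  rw [BCu_apply, if_neg hpi, if_pos hpj]; ring

lemma BCu_eq_zero {n : ℕ} (A : Matrix (Fin n) (Fin n) ℝ) {i j p : Fin n}
    (hpi : p ≠ i) (hpj : p ≠ j) : BCu A i j p = 0 := by
  rw [BCu_apply, if_neg hpi, if_neg hpj]; ring

/-- Coefficients of the decomposition. -/
def BCc {n : ℕ} (A : Matrix (Fin n) (Fin n) ℝ) (x : Fin n × Fin n) : ℝ :=
  if x.1 < x.2 then |A x.1 x.2|
  else if x.1 = x.2 then A x.1 x.1 - ∑ k ∈ Finset.univ.erase x.1, |A x.1 k|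
  else 0

lemma BCc_lt {n : ℕ} (A : Matrix (Fin n) (Fin n) ℝ) {i j : Fin n} (h : i < j) :
    BCc A (i, j) = |A i j| := by simp [BCc, h]

lemma BCc_diag {n : ℕ} (A : Matrix (Fin n) (Fin n) ℝ) (i : Fin n) :
    BCc A (i, i) = A i i - ∑ k ∈ Finset.univ.erase i, |A i k| := by simp [BCc]

lemma BCc_gt {n : ℕ} (A : Matrix (Fin n) (Fin n) ℝ) {i j : Fin n} (h : j < i) :
    BCc A (i, j) = 0 := by simp [BCc, asymm h, (ne_of_gt h : i ≠ j)]

/-- Matrices of the decomposition. -/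
def BCM {n : ℕ} (A : Matrix (Fin n) (Fin n) ℝ) (x : Fin n × Fin n) :
    Matrix (Fin n) (Fin n) ℝ :=
  if x.1 < x.2 then vecMulVec (BCu A x.1 x.2) (BCu A x.1 x.2)
  else vecMulVec (e x.1) (e x.1)

lemma BCM_lt {n : ℕ} (A : Matrix (Fin n) (Fin n) ℝ) {i j : Fin n} (h : i < j) :
    BCM A (i, j) = vecMulVec (BCu A i j) (BCu A i j) := by simp [BCM, h]

lemma BCM_ge {n : ℕ} (A : Matrix (Fin n) (Fin n) ℝ) {i j : Fin n} (h : ¬ i < j) :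
    BCM A (i, j) = vecMulVec (e i) (e i) := by simp [BCM, h]

lemma BCM_mem_U2 {n : ℕ} (A : Matrix (Fin n) (Fin n) ℝ) (x : Fin n × Fin n) :
    BCM A x ∈ U2 n := by
  obtain ⟨i, j⟩ := x
  by_cases h : i < j
  · refine ⟨BCu A i j, ?_, ?_, by rw [BCM_lt A h]⟩
    · have hsub : (Finset.univ.filter fun p => BCu A i j p ≠ 0) ⊆ {i, j} := by
        intro p hp
        simp only [Finset.mem_filter] at hp
        simp only [Finset.mem_insert, Finset.mem_singleton]
        by_contra hc
        push_neg at hc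
        exact hp.2 (BCu_eq_zero A hc.1 hc.2)
      calc (Finset.univ.filter fun p => BCu A i j p ≠ 0).card
          ≤ ({i, j} : Finset (Fin n)).card := Finset.card_le_card hsub
        _ ≤ 2 := (Finset.card_insert_le _ _).trans (by simp)
    · intro p hp
      by_cases hpi : p = i
      · left; exact BCu_eq_one A hpi (hpi ▸ ne_of_lt h)
      · by_cases hpj : p = j
        · rw [BCu_eq_sg A hpi hpj]; exact sg_pm _
        · exact absurd (BCu_eq_zero A hpi hpj) hp
  · refine ⟨e i, ?_, ?_, by rw [BCM_ge A h]⟩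
    · have hsub : (Finset.univ.filter fun p => e i p ≠ 0) ⊆ {i} := by
        intro p hp
        simp only [Finset.mem_filter, e_apply] at hp
        simp only [Finset.mem_singleton]
        by_contra hc
        simp [hc] at hp
      calc _ ≤ ({i} : Finset (Fin n)).card := Finset.card_le_card hsub
        _ ≤ 2 := by simp
    · intro p hp
      rw [e_apply] at hp ⊢
      by_cases hpi : p = i <;> simp [hpi] at hp ⊢

lemma BCc_nonneg {n : ℕ} {A : Matrix (Fin n) (Fin n) ℝ} (hA : A ∈ DD n)
    (x : Fin n × Fin n) : 0 ≤ BCc A x := by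
  unfold BCc
  split
  · exact abs_nonneg _
  · split
    · linarith [hA.2 x.1]
    · exact le_refl 0

/-- Any matrix in `U2 n` is symmetric. -/
lemma U2_symm {n : ℕ} {M : Matrix (Fin n) (Fin n) ℝ} (hM : M ∈ U2 n) : M.IsSymm := by
  obtain ⟨u, -, -, rfl⟩ := hM
  ext p q
  simp [Matrix.transpose_apply, Matrix.vecMulVec_apply, mul_comm]

/-- Any matrix in `U2 n` is diagonally dominant. -/
lemma U2_dd {n : ℕ} {M : Matrix (Fin n) (Fin n) ℝ} (hM : M ∈ U2 n) (p : Fin n) :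
    ∑ q ∈ Finset.univ.erase p, |M p q| ≤ M p p := by
  obtain ⟨u, hcard, hval, rfl⟩ := hM
  by_cases hp : u p = 0
  · simp [Matrix.vecMulVec_apply, hp]
  · have h1 : |u p| = 1 := by rcases hval p hp with h | h <;> simp [h]
    have hpS : p ∈ Finset.univ.filter (fun i => u i ≠ 0) := by simp [hp]
    have hle : ((Finset.univ.filter (fun i => u i ≠ 0)).erase p).card ≤ 1 := by
      have h2 := Finset.card_erase_of_mem hpS
      omega
    have h2 : ∑ q ∈ Finset.univ.erase p, |u q| ≤ 1 := by
      have hs : ∑ q ∈ (Finset.univ.filter (fun i => u i ≠ 0)).erase p, |u q|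
          = ∑ q ∈ Finset.univ.erase p, |u q| := by
        refine Finset.sum_subset ?_ ?_
        · intro q hq
          exact Finset.mem_erase.mpr ⟨(Finset.mem_erase.mp hq).1, Finset.mem_univ q⟩
        · intro q hq hq'
          have hqp : q ≠ p := (Finset.mem_erase.mp hq).1
          have hq0 : u q = 0 := by
            by_contra h0
            exact hq' (Finset.mem_erase.mpr
              ⟨hqp, Finset.mem_filter.mpr ⟨Finset.mem_univ q, h0⟩⟩)
          rw [hq0, abs_zero]
      rw [← hs]
      calc ∑ q ∈ (Finset.univ.filter (fun i => u i ≠ 0)).erase p, |u q|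
          ≤ ∑ _q ∈ (Finset.univ.filter (fun i => u i ≠ 0)).erase p, (1 : ℝ) := by
            refine Finset.sum_le_sum fun q hq => ?_
            have hq0 : u q ≠ 0 := (Finset.mem_filter.mp (Finset.mem_of_mem_erase hq)).2
            rcases hval q hq0 with h | h <;> simp [h]
        _ = ((Finset.univ.filter (fun i => u i ≠ 0)).erase p).card := by simp
        _ ≤ 1 := by exact_mod_cast hle
    calc ∑ q ∈ Finset.univ.erase p, |vecMulVec u u p q|
        = |u p| * ∑ q ∈ Finset.univ.erase p, |u q| := by
          rw [Finset.mul_sum]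
          exact Finset.sum_congr rfl fun q _ => by rw [Matrix.vecMulVec_apply, abs_mul]
      _ ≤ 1 * 1 :=
          mul_le_mul (le_of_eq h1) h2 (Finset.sum_nonneg fun q _ => abs_nonneg _)
            (by norm_num)
      _ = |u p| * |u p| := by rw [h1]
      _ = u p * u p := abs_mul_abs_self _
      _ = vecMulVec u u p p := (Matrix.vecMulVec_apply _ _ _ _).symm

/-- The decomposition identity. -/
lemma BC_decomp {n : ℕ} (A : Matrix (Fin n) (Fin n) ℝ) (hsymm : A.IsSymm) :
    A = ∑ x : Fin n × Fin n, BCc A x • BCM A x := by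
  ext p q
  rw [Matrix.sum_apply]
  simp only [Matrix.smul_apply, smul_eq_mul]
  by_cases hpq : p = q
  · subst hpq
    rw [Fintype.sum_prod_type]
    rw [← Finset.sum_erase_add _ _ (Finset.mem_univ p)]
    have houter : ∀ i ∈ Finset.univ.erase p,
        (∑ j, BCc A (i, j) * BCM A (i, j) p p) = if i < p then |A p i| else 0 := by
      intro i hi
      have hip : i ≠ p := (Finset.mem_erase.mp hi).1
      rw [Finset.sum_eq_single p]
      · by_cases h : i < p
        · rw [BCM_lt A h, Matrix.vecMulVec_apply, BCu_eq_sg A (Ne.symm hip) rfl, sg_sq,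
            mul_one, BCc_lt A h, if_pos h, hsymm.apply]
        · have hpi : p < i := lt_of_le_of_ne (not_lt.mp h) (Ne.symm hip)
          rw [BCM_ge A h, Matrix.vecMulVec_apply,
            (by rw [e_apply, if_neg (Ne.symm hip)] : e i p = 0), if_neg h]
          ring
      · intro j _ hjp
        by_cases h : i < j
        · rw [BCM_lt A h, Matrix.vecMulVec_apply,
            BCu_eq_zero A (Ne.symm hip) (Ne.symm hjp)]
          ring
        · rw [BCM_ge A h, Matrix.vecMulVec_apply,
            (by rw [e_apply, if_neg (Ne.symm hip)] : e i p = 0)]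
          ring
      · intro h; exact absurd (Finset.mem_univ p) h
    rw [Finset.sum_congr rfl houter]
    rw [← Finset.sum_erase_add _ (fun j => BCc A (p, j) * BCM A (p, j) p p)
      (Finset.mem_univ p)]
    have hinner : ∀ j ∈ Finset.univ.erase p,
        BCc A (p, j) * BCM A (p, j) p p = if p < j then |A p j| else 0 := by
      intro j hj
      have hjp : j ≠ p := (Finset.mem_erase.mp hj).1
      by_cases h : p < j
      · rw [BCM_lt A h, Matrix.vecMulVec_apply, BCu_eq_one A rfl (Ne.symm hjp),
          mul_one, mul_one, BCc_lt A h, if_pos h]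
      · have hjp' : j < p := lt_of_le_of_ne (not_lt.mp h) hjp
        rw [BCc_gt A hjp', zero_mul, if_neg h]
    rw [Finset.sum_congr rfl hinner]
    have hdiag : BCc A (p, p) * BCM A (p, p) p p
        = A p p - ∑ k ∈ Finset.univ.erase p, |A p k| := by
      rw [BCM_ge A (lt_irrefl p), Matrix.vecMulVec_apply,
        (by rw [e_apply, if_pos rfl] : e p p = 1), mul_one, mul_one, BCc_diag]
    rw [hdiag]
    have key : ∑ i ∈ Finset.univ.erase p, (if i < p then |A p i| else 0)
        + ∑ j ∈ Finset.univ.erase p, (if p < j then |A p j| else 0)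
        = ∑ k ∈ Finset.univ.erase p, |A p k| := by
      rw [← Finset.sum_add_distrib]
      refine Finset.sum_congr rfl fun k hk => ?_
      have hkp : k ≠ p := (Finset.mem_erase.mp hk).1
      rcases lt_or_gt_of_ne hkp with h | h
      · rw [if_pos h, if_neg (asymm h), add_zero]
      · rw [if_neg (asymm h), if_pos h, zero_add]
    linarith [key]
  · have hne : ((p, q) : Fin n × Fin n) ≠ (q, p) := by
      simp [Prod.ext_iff, hpq]
    have hzero : ∀ x ∈ (Finset.univ : Finset (Fin n × Fin n)),
        x ∉ ({(p, q), (q, p)} : Finset (Fin n × Fin n)) →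
        BCc A x * BCM A x p q = 0 := by
      rintro ⟨i, j⟩ - hx
      simp only [Finset.mem_insert, Finset.mem_singleton, Prod.mk.injEq, not_or,
        not_and] at hx
      by_cases h : i < j
      · have h0 : BCu A i j p = 0 ∨ BCu A i j q = 0 := by
          by_cases hpi : p = i
          · right
            refine BCu_eq_zero A (fun hqi => hpq (hpi.trans hqi.symm)) ?_
            intro hqj
            exact hx.1 hpi.symm hqj.symm
          · by_cases hpj : p = j
            · right
              refine BCu_eq_zero A ?_ (fun hqj => hpq (hpj.trans hqj.symm))
              intro hqi
              exact hx.2 hqi.symm hpj.symm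
            · left; exact BCu_eq_zero A hpi hpj
        rw [BCM_lt A h, Matrix.vecMulVec_apply]
        rcases h0 with h0 | h0 <;> rw [h0] <;> ring
      · by_cases hij : i = j
        · rw [BCM_ge A h, Matrix.vecMulVec_apply]
          by_cases hpi : p = i
          · rw [(by rw [e_apply, if_neg (fun hqi => hpq (hpi.trans hqi.symm))] :
              e i q = 0)]
            ring
          · rw [(by rw [e_apply, if_neg hpi] : e i p = 0)]
            ring
        · have hji : j < i := lt_of_le_of_ne (not_lt.mp h) (Ne.symm hij)
          rw [BCc_gt A hji, zero_mul]
    rw [← Finset.sum_subset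
      (Finset.subset_univ ({(p, q), (q, p)} : Finset (Fin n × Fin n))) hzero]
    rw [Finset.sum_pair hne]
    rcases lt_or_gt_of_ne hpq with h | h
    · rw [BCc_gt A h, zero_mul, add_zero, BCM_lt A h, Matrix.vecMulVec_apply,
        BCu_eq_one A rfl (ne_of_lt h), BCu_eq_sg A (ne_of_gt h) rfl, one_mul,
        BCc_lt A h, abs_mul_sg]
    · rw [BCc_gt A h, zero_mul, zero_add, BCM_lt A h, Matrix.vecMulVec_apply,
        BCu_eq_sg A (ne_of_gt h) rfl, BCu_eq_one A rfl (ne_of_lt h), mul_one,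
        BCc_lt A h, abs_mul_sg, hsymm.apply]

/-- Barker–Carlson: `DD_n = cone(U_{n,2})`. -/
theorem stmt1 (n : ℕ) (hn : 0 < n) : DD n = coneHull (U2 n) := by
  ext A
  constructor
  · rintro ⟨hsymm, hdd⟩
    refine ⟨n * n, fun m => BCc A (finProdFinEquiv.symm m),
      fun m => BCM A (finProdFinEquiv.symm m),
      fun m => BCc_nonneg ⟨hsymm, hdd⟩ _, fun m => BCM_mem_U2 A _, ?_⟩
    rw [Equiv.sum_comp finProdFinEquiv.symm (fun x => BCc A x • BCM A x)]
    exact BC_decomp A hsymm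
  · rintro ⟨k, c, M, hc, hM, rfl⟩
    constructor
    · show (∑ i, c i • M i)ᵀ = _
      rw [Matrix.transpose_sum]
      refine Finset.sum_congr rfl fun i _ => ?_
      rw [Matrix.transpose_smul, U2_symm (hM i)]
    · intro p
      have hXpq : ∀ q, (∑ i, c i • M i) p q = ∑ i, c i * M i p q := by
        intro q
        rw [Matrix.sum_apply]
        exact Finset.sum_congr rfl fun i _ => rfl
      calc ∑ q ∈ Finset.univ.erase p, |(∑ i, c i • M i) p q|
          ≤ ∑ q ∈ Finset.univ.erase p, ∑ i, c i * |M i p q| := by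
            refine Finset.sum_le_sum fun q _ => ?_
            rw [hXpq]
            refine (Finset.abs_sum_le_sum_abs _ _).trans ?_
            exact Finset.sum_le_sum fun i _ => by
              rw [abs_mul, abs_of_nonneg (hc i)]
        _ = ∑ i, c i * ∑ q ∈ Finset.univ.erase p, |M i p q| := by
            rw [Finset.sum_comm]
            exact Finset.sum_congr rfl fun i _ => (Finset.mul_sum _ _ _).symm
        _ ≤ ∑ i, c i * M i p p :=
            Finset.sum_le_sum fun i _ =>
              mul_le_mul_of_nonneg_left (U2_dd (hM i) p) (hc i)
        _ = (∑ i, c i • M i) p p := (hXpq p).symm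
end
end

section
/- For every positive integer n, FW(2) = SDD_n: a symmetric n×n real matrix has factor width at most 2 if and only if it is scaled diagonally dominant. -/
open Matrix Finset

noncomputable section

/-- `FW(k)`: symmetric matrices of factor width at most `k`. -/
def FW (n k : ℕ) : Set (Matrix (Fin n) (Fin n) ℝ) :=
  {A | A.IsSymm ∧ ∃ (m : ℕ) (V : Matrix (Fin n) (Fin m) ℝ),
    A = V * Vᵀ ∧ ∀ c : Fin m, (Finset.univ.filter fun i => V i c ≠ 0).card ≤ k}


/-!
`SDD ⊆ FW(2)`: a diagonally dominant `B` is the sum of the rank-one matrices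
`|B i j| / 2 · (e i + sign (B i j) e j)(e i + sign (B i j) e j)ᵀ` over `i ≠ j` and of
`(B i i - ∑_{j ≠ i} |B i j|) e i e iᵀ`, each with a factor of width at most two, and undoing the
diagonal scaling preserves the supports of the factors.

`FW(2) ⊆ SDD`: if `A = V Vᵀ` with columns of `V` supported on at most two indices, flipping
the sign of one entry in each column shows that the comparison matrix of `A` (diagonal kept,
off-diagonal entries replaced by `-|A i j|`) is positive semidefinite. A positive semidefinite
Z-matrix `M` admits `d > 0` with `M d ≥ 0`: a minimiser `x` of `xᵀ M x` on the simplex satisfies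
`M x ≥ 0`, the zero set of `x` decouples from its support, and one recurses on the zero set.
Then `D = diag d` makes `D A D` diagonally dominant.
-/

theorem nonneg_of_forall_mul_add_sq_mul_nonneg {α β T : ℝ} (hT : 0 < T)
    (h : ∀ t, 0 < t → t ≤ T → 0 ≤ t * α + t ^ 2 * β) : 0 ≤ α := by
  by_contra! hα
  set t := min T (-α / (|β| + 1))
  have ht : 0 < t := lt_min hT (div_pos (neg_pos.mpr hα) (by positivity))
  have htβ : t * |β| < -α := by
    calc t * |β| ≤ -α / (|β| + 1) * |β| := by gcongr; exact min_le_right _ _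
      _ < -α := by
        rw [div_mul_eq_mul_div, div_lt_iff₀ (by positivity)]
        nlinarith [abs_nonneg β]
  nlinarith [h t ht (min_le_left _ _), mul_le_mul_of_nonneg_left (le_abs_self β) (sq_nonneg t),
    mul_lt_mul_of_pos_left htβ ht]

section PositiveScaling

variable {ι : Type*} [Fintype ι]

theorem dotProduct_mulVec_add_smul {M : Matrix ι ι ℝ} (hM : M.IsSymm) (x v : ι → ℝ) (t : ℝ) :
    (x + t • v) ⬝ᵥ M *ᵥ (x + t • v) =
      x ⬝ᵥ M *ᵥ x + 2 * t * (v ⬝ᵥ M *ᵥ x) + t ^ 2 * (v ⬝ᵥ M *ᵥ v) := by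
  have hswap : x ⬝ᵥ M *ᵥ v = v ⬝ᵥ M *ᵥ x := by
    rw [dotProduct_mulVec, ← mulVec_transpose, hM.eq, dotProduct_comm]
  simp only [mulVec_add, mulVec_smul, dotProduct_add, add_dotProduct, dotProduct_smul,
    smul_dotProduct, smul_eq_mul, hswap]
  ring

theorem sub_dotProduct_mulVec_nonneg_of_isMinOn {M : Matrix ι ι ℝ} (hM : M.IsSymm)
    {s : Set (ι → ℝ)} (hs : Convex ℝ s) {x : ι → ℝ} (hx : x ∈ s)
    (hmin : IsMinOn (fun y ↦ y ⬝ᵥ M *ᵥ y) s x) {y : ι → ℝ} (hy : y ∈ s) :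
    0 ≤ (y - x) ⬝ᵥ M *ᵥ x := by
  suffices 0 ≤ 2 * ((y - x) ⬝ᵥ M *ᵥ x) by linarith
  refine nonneg_of_forall_mul_add_sq_mul_nonneg (β := (y - x) ⬝ᵥ M *ᵥ (y - x)) one_pos
    fun t ht ht1 ↦ ?_
  have hmem : x + t • (y - x) ∈ s := by
    simpa using hs.add_smul_sub_mem hx hy ⟨ht.le, ht1⟩
  have := isMinOn_iff.mp hmin _ hmem
  rw [dotProduct_mulVec_add_smul hM] at this
  nlinarith

/-- Moving the mass of `x` at `b` onto `a` stays in the simplex. -/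
theorem mul_mulVec_le_of_isMinOn_stdSimplex {M : Matrix ι ι ℝ} (hM : M.IsSymm) {x : ι → ℝ}
    (hx : x ∈ stdSimplex ℝ ι) (hmin : IsMinOn (fun y ↦ y ⬝ᵥ M *ᵥ y) (stdSimplex ℝ ι) x)
    (a b : ι) : x b * (M *ᵥ x) b ≤ x b * (M *ᵥ x) a := by
  classical
  set y := x + Pi.single a (x b) - Pi.single b (x b)
  have hy : y ∈ stdSimplex ℝ ι := by
    refine ⟨fun k ↦ ?_, ?_⟩
    · have := hx.1 k
      have := hx.1 b
      simp only [y, Pi.sub_apply, Pi.add_apply, Pi.single_apply]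
      split_ifs <;> subst_vars <;> linarith
    · simp [y, sum_add_distrib, sum_sub_distrib, hx.2]
  have := sub_dotProduct_mulVec_nonneg_of_isMinOn hM (convex_stdSimplex ℝ ι) hx hmin hy
  simp only [y, sub_dotProduct, add_dotProduct, single_dotProduct] at this
  linarith

theorem Matrix.PosSemidef.exists_nonneg_ne_zero_mulVec_nonneg {M : Matrix ι ι ℝ}
    (hM : M.PosSemidef) [Nonempty ι] : ∃ x : ι → ℝ, 0 ≤ x ∧ x ≠ 0 ∧ 0 ≤ M *ᵥ x := by
  classical
  have hsymm : M.IsSymm := isHermitian_iff_isSymm.mp hM.1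
  obtain ⟨x, hx, hmin⟩ := (isCompact_stdSimplex ℝ ι).exists_isMinOn
    ⟨_, single_mem_stdSimplex ℝ (Classical.arbitrary ι)⟩
    (f := fun y ↦ y ⬝ᵥ M *ᵥ y) (by fun_prop)
  refine ⟨x, hx.1, fun h ↦ by simpa [h] using hx.2, fun a ↦ ?_⟩
  calc (0 : ℝ) ≤ x ⬝ᵥ M *ᵥ x := by simpa using hM.dotProduct_mulVec_nonneg x
    _ = ∑ b, x b * (M *ᵥ x) b := rfl
    _ ≤ ∑ b, x b * (M *ᵥ x) a :=
      sum_le_sum fun b _ ↦ mul_mulVec_le_of_isMinOn_stdSimplex hsymm hx hmin a b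
    _ = (M *ᵥ x) a := by rw [← sum_mul, hx.2, one_mul]

theorem apply_eq_zero_of_mulVec_nonneg {M : Matrix ι ι ℝ} (hZ : ∀ i j, i ≠ j → M i j ≤ 0)
    {x : ι → ℝ} (hx : 0 ≤ x) (hMx : 0 ≤ M *ᵥ x) {k j : ι} (hk : x k = 0) (hj : x j ≠ 0) :
    M k j = 0 := by
  have hterm : ∀ i ∈ univ, M k i * x i ≤ 0 := fun i _ ↦ by
    rcases eq_or_ne k i with rfl | hki
    · simp [hk]
    · exact mul_nonpos_of_nonpos_of_nonneg (hZ k i hki) (hx i)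
  have hsum : ∑ i, M k i * x i = 0 := le_antisymm (sum_nonpos hterm) (hMx k)
  exact (mul_eq_zero.mp ((sum_eq_zero_iff_of_nonpos hterm).mp hsum j (mem_univ j))).resolve_right hj

theorem Matrix.PosSemidef.exists_pos_mulVec_nonneg {M : Matrix ι ι ℝ} (hM : M.PosSemidef)
    (hZ : ∀ i j, i ≠ j → M i j ≤ 0) : ∃ d : ι → ℝ, (∀ i, 0 < d i) ∧ 0 ≤ M *ᵥ d := by
  classical
  induction h : Fintype.card ι using Nat.strong_induction_on generalizing ι with
  | _ N ih =>
  rcases isEmpty_or_nonempty ι with hι | hι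
  · exact ⟨0, isEmptyElim, fun i ↦ isEmptyElim i⟩
  obtain ⟨x, hx0, hx, hMx⟩ := hM.exists_nonneg_ne_zero_mulVec_nonneg
  obtain ⟨b, hb⟩ : ∃ b, x b ≠ 0 := Function.ne_iff.mp hx
  obtain ⟨d, hd, hMd⟩ := ih _ (h ▸ Fintype.card_subtype_lt (p := fun k ↦ x k = 0) hb)
    (hM.submatrix Subtype.val) (fun i j hij ↦ by exact hZ i j (Subtype.val_injective.ne hij)) rfl
  -- `M` vanishes between the zero set of `x` and its support, so `d` extended by zero adds to `x`.
  set z : ι → ℝ := fun k ↦ if hk : x k = 0 then d ⟨k, hk⟩ else 0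
  have hMz : ∀ k, (M *ᵥ z) k = ∑ j : {j // x j = 0}, M k j * d j := fun k ↦ by
    have hout : ∑ j : {j // x j ≠ 0}, M k j * z j = 0 := sum_eq_zero fun j _ ↦ by simp [z, j.2]
    rw [mulVec, dotProduct, ← Fintype.sum_subtype_add_sum_subtype (fun j ↦ x j = 0), hout,
      add_zero]
    exact sum_congr rfl fun j _ ↦ by simp [z, j.2]
  refine ⟨x + z, fun k ↦ ?_, ?_⟩
  · by_cases hk : x k = 0
    · simpa [z, hk] using hd ⟨k, hk⟩
    · simpa [z, hk] using lt_of_le_of_ne (hx0 k) (Ne.symm hk)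
  refine mulVec_add M x z ▸ add_nonneg hMx fun k ↦ ?_
  by_cases hk : x k = 0
  · rw [Pi.zero_apply, hMz]
    exact hMd ⟨k, hk⟩
  · have hsymm : M.IsSymm := isHermitian_iff_isSymm.mp hM.1
    rw [Pi.zero_apply, hMz, sum_eq_zero fun j _ ↦ by
      rw [← hsymm.apply, apply_eq_zero_of_mulVec_nonneg hZ hx0 hMx j.2 hk, zero_mul]]

end PositiveScaling

section Comparison

variable {ι κ : Type*} [Fintype ι]

theorem dotProduct_mulVec_abs_le {M : Matrix ι ι ℝ} (hZ : ∀ i j, i ≠ j → M i j ≤ 0)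
    (x : ι → ℝ) : |x| ⬝ᵥ M *ᵥ |x| ≤ x ⬝ᵥ M *ᵥ x := by
  simp only [dotProduct, mulVec, mul_sum, Pi.abs_apply]
  refine sum_le_sum fun i _ ↦ sum_le_sum fun j _ ↦ ?_
  rcases eq_or_ne i j with rfl | hij
  · exact le_of_eq (by linear_combination M i i * abs_mul_abs_self (x i))
  · rw [mul_left_comm, mul_left_comm (x i)]
    exact mul_le_mul_of_nonpos_left (by rw [← abs_mul]; exact le_abs_self _) (hZ i j hij)

theorem dotProduct_mulVec_le_of_le {M N : Matrix ι ι ℝ} (hMN : ∀ i j, M i j ≤ N i j)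
    {y : ι → ℝ} (hy : 0 ≤ y) : y ⬝ᵥ M *ᵥ y ≤ y ⬝ᵥ N *ᵥ y := by
  simp only [dotProduct, mulVec, mul_sum]
  exact sum_le_sum fun i _ ↦ sum_le_sum fun j _ ↦
    mul_le_mul_of_nonneg_left (mul_le_mul_of_nonneg_right (hMN i j) (hy j)) (hy i)

/-- Take `|u|` and flip its sign at one point of the support. -/
theorem exists_sign_change_of_card_support_le_two {u : ι → ℝ} (hu : #{i | u i ≠ 0} ≤ 2) :
    ∃ s : ι → ℝ, (∀ i, s i * s i = u i * u i) ∧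
      ∀ i j, i ≠ j → s i * s j = -(|u i| * |u j|) := by
  classical
  by_cases h : ∃ a, u a ≠ 0
  swap
  · simp only [not_exists, not_not] at h
    exact ⟨0, by simp [h], by simp [h]⟩
  obtain ⟨a, ha⟩ := h
  refine ⟨fun i ↦ if i = a then -|u i| else |u i|, fun i ↦ ?_, fun i j hij ↦ ?_⟩
  · dsimp only
    split_ifs <;> simp
  by_cases hi : u i = 0
  · simp [hi]
  by_cases hj : u j = 0
  · simp [hj]
  have : ¬ 2 < #{i | u i ≠ 0} := not_lt.mpr hu
  rw [two_lt_card] at this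
  by_cases hia : i = a
  · subst hia; simp [Ne.symm hij]
  by_cases hja : j = a
  · subst hja; simp [hij]
  exact absurd ⟨a, by simpa, i, by simpa, j, by simpa, Ne.symm hia, Ne.symm hja, hij⟩ this

variable [DecidableEq ι]

def Matrix.comparison (A : Matrix ι ι ℝ) : Matrix ι ι ℝ :=
  of fun i j ↦ if i = j then A i j else -|A i j|

omit [Fintype ι] in
theorem Matrix.comparison_apply_nonpos (A : Matrix ι ι ℝ) {i j : ι} (hij : i ≠ j) :
    A.comparison i j ≤ 0 := by
  simp [comparison, hij]

omit [Fintype ι] in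
theorem Matrix.IsSymm.comparison {A : Matrix ι ι ℝ} (hA : A.IsSymm) : A.comparison.IsSymm :=
  IsSymm.ext fun i j ↦ by simp [Matrix.comparison, eq_comm, hA.apply i j]

theorem Matrix.comparison_mulVec_apply (A : Matrix ι ι ℝ) (d : ι → ℝ) (i : ι) :
    (A.comparison *ᵥ d) i = A i i * d i - ∑ j ∈ univ.erase i, |A i j| * d j := by
  rw [mulVec, dotProduct, ← add_sum_erase _ _ (mem_univ i), sub_eq_add_neg, ← sum_neg_distrib]
  congr 1
  · simp [comparison]
  · exact sum_congr rfl fun j hj ↦ by simp [comparison, (ne_of_mem_erase hj).symm]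

theorem Matrix.posSemidef_comparison_mul_transpose [Fintype κ] (V : Matrix ι κ ℝ)
    (hV : ∀ c, #{i | V i c ≠ 0} ≤ 2) : (V * Vᵀ).comparison.PosSemidef := by
  choose s hs_sq hs_off using fun c ↦ exists_sign_change_of_card_support_le_two (hV c)
  set S : Matrix ι κ ℝ := of fun i c ↦ s c i
  have hle : ∀ i j, (S * Sᵀ) i j ≤ (V * Vᵀ).comparison i j := by
    intro i j
    simp only [comparison, of_apply, mul_apply, transpose_apply, S]
    rcases eq_or_ne i j with rfl | hij
    · simp [hs_sq]
    · rw [if_neg hij, sum_congr rfl fun c _ ↦ hs_off c i j hij, sum_neg_distrib, neg_le_neg_iff]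
      exact (abs_sum_le_sum_abs _ _).trans_eq (by simp [abs_mul])
  refine .of_dotProduct_mulVec_nonneg ?_ fun x ↦ ?_
  · have hsymm : (V * Vᵀ).IsSymm := by simp [IsSymm, transpose_mul]
    exact isHermitian_iff_isSymm.mpr hsymm.comparison
  calc 0 ≤ |x| ⬝ᵥ (S * Sᵀ) *ᵥ |x| := by
        simpa using (posSemidef_self_mul_conjTranspose S).dotProduct_mulVec_nonneg |x|
    _ ≤ |x| ⬝ᵥ (V * Vᵀ).comparison *ᵥ |x| := dotProduct_mulVec_le_of_le hle (abs_nonneg x)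
    _ ≤ x ⬝ᵥ (V * Vᵀ).comparison *ᵥ x :=
        dotProduct_mulVec_abs_le (fun _ _ ↦ comparison_apply_nonpos _) x
    _ = star x ⬝ᵥ (V * Vᵀ).comparison *ᵥ x := by simp

end Comparison

section DiagonallyDominantFactor

theorem sqrt_abs_div_two_mul_self (x : ℝ) : √(|x| / 2) * √(|x| / 2) = |x| / 2 :=
  Real.mul_self_sqrt (by positivity)

variable {ι : Type*} [Fintype ι] [DecidableEq ι]

/-- Column `(a, a)` carries the slack of row `a`; columns `(a, b)` and `(b, a)` each contribute
half of `B a b = B b a`. -/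
def Matrix.ddFactor (B : Matrix ι ι ℝ) : Matrix ι (ι × ι) ℝ :=
  of fun k p ↦ if p.1 = p.2 then
      if k = p.1 then √(B k k - ∑ j ∈ univ.erase k, |B k j|) else 0
    else (if k = p.1 then √(|B p.1 p.2| / 2) else 0) +
      if k = p.2 then SignType.sign (B p.1 p.2) * √(|B p.1 p.2| / 2) else 0

namespace Matrix

variable (B : Matrix ι ι ℝ)

theorem ddFactor_apply_eq_zero {k : ι} {p : ι × ι} (h₁ : k ≠ p.1) (h₂ : k ≠ p.2) :
    B.ddFactor k p = 0 := by
  simp [ddFactor, h₁, h₂]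

theorem ddFactor_apply_diag (a : ι) :
    B.ddFactor a (a, a) = √(B a a - ∑ j ∈ univ.erase a, |B a j|) := by
  simp [ddFactor]

theorem ddFactor_apply_left {a b : ι} (hab : a ≠ b) : B.ddFactor a (a, b) = √(|B a b| / 2) := by
  simp [ddFactor, hab]

theorem ddFactor_apply_right {a b : ι} (hab : a ≠ b) :
    B.ddFactor b (a, b) = SignType.sign (B a b) * √(|B a b| / 2) := by
  simp [ddFactor, hab, hab.symm]

theorem card_ddFactor_ne_zero_le (p : ι × ι) : #{k | B.ddFactor k p ≠ 0} ≤ 2 := by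
  refine (card_le_card fun k hk ↦ ?_).trans (card_le_two (a := p.1) (b := p.2))
  by_contra h
  simp only [mem_insert, mem_singleton, not_or] at h
  simp [ddFactor_apply_eq_zero B h.1 h.2] at hk

variable {B}

theorem ddFactor_mul_transpose_apply_of_ne (hB : B.IsSymm) {k l : ι} (hkl : k ≠ l) :
    (B.ddFactor * B.ddFactorᵀ) k l = B k l := by
  rw [mul_apply, Fintype.sum_eq_add (k, l) (l, k) (fun h ↦ hkl (congrArg Prod.fst h))]
  · simp only [transpose_apply]
    rw [ddFactor_apply_left B hkl, ddFactor_apply_right B hkl, ddFactor_apply_left B hkl.symm,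
      ddFactor_apply_right B hkl.symm, hB.apply k l]
    linear_combination (SignType.sign (B k l) : ℝ) * 2 * sqrt_abs_div_two_mul_self (B k l) +
      sign_mul_abs (B k l)
  · rintro ⟨a, b⟩ ⟨h1, h2⟩
    simp only [transpose_apply]
    by_cases hk : k = a ∨ k = b
    · by_cases hl : l = a ∨ l = b
      · exfalso
        rcases hk with rfl | rfl <;> rcases hl with rfl | rfl <;> simp_all
      · rw [not_or] at hl
        rw [ddFactor_apply_eq_zero B (p := (a, b)) hl.1 hl.2, mul_zero]
    · rw [not_or] at hk
      rw [ddFactor_apply_eq_zero B (p := (a, b)) hk.1 hk.2, zero_mul]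

theorem ddFactor_mul_transpose_apply_self (hB : B.IsSymm)
    (hdd : ∀ i, ∑ j ∈ univ.erase i, |B i j| ≤ B i i) (k : ι) :
    (B.ddFactor * B.ddFactorᵀ) k k = B k k := by
  have hrow : ∑ b, B.ddFactor k (k, b) * B.ddFactor k (k, b) =
      (B k k - ∑ j ∈ univ.erase k, |B k j|) + ∑ b ∈ univ.erase k, |B k b| / 2 := by
    rw [← add_sum_erase _ _ (mem_univ k), ddFactor_apply_diag,
      Real.mul_self_sqrt (sub_nonneg.2 (hdd k))]
    congr 1
    exact sum_congr rfl fun b hb ↦ by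
      rw [ddFactor_apply_left B (ne_of_mem_erase hb).symm, sqrt_abs_div_two_mul_self]
  have hcol : ∀ a ∈ univ.erase k,
      ∑ b, B.ddFactor k (a, b) * B.ddFactor k (a, b) = |B k a| / 2 := fun a ha ↦ by
    have hak := ne_of_mem_erase ha
    rw [sum_eq_single k (fun b _ hb ↦ by rw [ddFactor_apply_eq_zero B hak.symm hb.symm, zero_mul])
      (by simp), ddFactor_apply_right B hak, hB.apply k a]
    have hsign : (SignType.sign (B k a) : ℝ) ^ 2 * |B k a| = |B k a| := by
      rw [sq, mul_assoc, sign_mul_abs, sign_mul_self]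
    linear_combination (SignType.sign (B k a) : ℝ) ^ 2 * sqrt_abs_div_two_mul_self (B k a) +
      hsign / 2
  simp only [mul_apply, transpose_apply]
  rw [Fintype.sum_prod_type, ← add_sum_erase _ _ (mem_univ k), hrow, sum_congr rfl hcol,
    ← sum_div]
  ring

theorem ddFactor_mul_transpose (hB : B.IsSymm)
    (hdd : ∀ i, ∑ j ∈ univ.erase i, |B i j| ≤ B i i) : B.ddFactor * B.ddFactorᵀ = B := by
  ext k l
  rcases eq_or_ne k l with rfl | hkl
  · exact ddFactor_mul_transpose_apply_self hB hdd k
  · exact ddFactor_mul_transpose_apply_of_ne hB hkl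

end Matrix

end DiagonallyDominantFactor

theorem mul_transpose_mem_FW {n k : ℕ} {κ : Type*} [Fintype κ] (V : Matrix (Fin n) κ ℝ)
    (hV : ∀ c, #{i | V i c ≠ 0} ≤ k) : V * Vᵀ ∈ FW n k := by
  set W := V.submatrix id (Fintype.equivFin κ).symm
  have hW : W * Wᵀ = V * Vᵀ := by
    rw [transpose_submatrix, submatrix_mul_equiv, submatrix_id_id]
  exact ⟨by simp [IsSymm, transpose_mul], _, W, hW.symm, fun c ↦ hV _⟩

theorem diagonal_mul_mul_diagonal_mem_DD {n : ℕ} {A : Matrix (Fin n) (Fin n) ℝ} (hA : A.IsSymm)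
    {d : Fin n → ℝ} (hd : ∀ i, 0 < d i) (hAd : 0 ≤ A.comparison *ᵥ d) :
    diagonal d * A * diagonal d ∈ DD n := by
  refine ⟨by simp [IsSymm, transpose_mul, hA.eq, mul_assoc], fun i ↦ ?_⟩
  have hrow := hAd i
  rw [Pi.zero_apply, comparison_mulVec_apply, sub_nonneg] at hrow
  simp only [diagonal_mul, mul_diagonal, abs_mul, abs_of_pos (hd _)]
  calc ∑ j ∈ univ.erase i, d i * |A i j| * d j = d i * ∑ j ∈ univ.erase i, |A i j| * d j := by
        rw [mul_sum]; exact sum_congr rfl fun j _ ↦ by ring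
    _ ≤ d i * (A i i * d i) := mul_le_mul_of_nonneg_left hrow (hd i).le
    _ = d i * A i i * d i := by ring

theorem FW_two_subset_SDD (n : ℕ) : FW n 2 ⊆ SDD n := by
  rintro A ⟨hA, m, V, rfl, hV⟩
  obtain ⟨d, hd, hAd⟩ := (posSemidef_comparison_mul_transpose V hV).exists_pos_mulVec_nonneg
    fun _ _ ↦ comparison_apply_nonpos _
  exact ⟨hA, d, hd, diagonal_mul_mul_diagonal_mem_DD hA hd hAd⟩

theorem SDD_subset_FW_two (n : ℕ) : SDD n ⊆ FW n 2 := by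
  rintro A ⟨-, d, hd, hB⟩
  set B := diagonal d * A * diagonal d
  have hA : A = (diagonal d⁻¹ * B.ddFactor) * (diagonal d⁻¹ * B.ddFactor)ᵀ := by
    rw [transpose_mul, diagonal_transpose, ← Matrix.mul_assoc, Matrix.mul_assoc _ B.ddFactor,
      ddFactor_mul_transpose hB.1 hB.2]
    ext i j
    simp only [B, diagonal_mul, mul_diagonal, Pi.inv_apply]
    field_simp [(hd i).ne', (hd j).ne']
  rw [hA]
  refine mul_transpose_mem_FW _ fun c ↦ ?_
  simpa [diagonal_mul, (hd _).ne'] using B.card_ddFactor_ne_zero_le c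

theorem stmt2_general (n : ℕ) : FW n 2 = SDD n :=
  (FW_two_subset_SDD n).antisymm (SDD_subset_FW_two n)

/-- `FW(2) = SDD_n`. -/
theorem stmt2 (n : ℕ) (hn : 0 < n) : FW n 2 = SDD n :=
  stmt2_general n
end
end

section
/- For every positive integer n, the set SDD_n of scaled diagonally dominant symmetric n×n matrices is a convex cone: it contains 0, is closed under addition, and is closed under multiplication by nonnegative real scalars. -/
open Matrix Finset

noncomputable section

/-!
Write `M(A)` for the comparison matrix of `A` (diagonal `Aᵢᵢ`, off-diagonal `-|Aᵢⱼ|`). A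
symmetric `A` is scaled diagonally dominant iff `M(A) g ≥ 0` for some `g > 0`. For a symmetric
Z-matrix `C` (off-diagonal entries `≤ 0`) this property is equivalent to positive
semidefiniteness. One direction is the identity, for `x = g ∘ y`,
`xᵀ C x = ∑ᵢ gᵢ yᵢ² (C g)ᵢ - ½ ∑ᵢⱼ Cᵢⱼ gᵢ gⱼ (yᵢ - yⱼ)²`.
For the other, a minimiser `d` of `xᵀ C x` on the face of the standard simplex spanned by `s`
satisfies `(C d)ᵢ ≥ dᵀ C d ≥ 0` on `s`; the zero set of `d` is decoupled from its support, so
one recurses on it. Since `M(A) + M(B) ≤ M(A + B)` entrywise and positive semidefiniteness is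
preserved by sums, `SDD n` is closed under addition; closure under scaling is immediate.
-/

open Filter Topology in
theorem nonneg_of_forall_nonneg_add_mul {a b : ℝ} (h : ∀ t ∈ Set.Ioc (0 : ℝ) 1, 0 ≤ a + t * b) :
    0 ≤ a := by
  have hlim : Tendsto (fun t : ℝ => a + t * b) (𝓝[>] 0) (𝓝 a) := by
    have hc : Continuous fun t : ℝ => a + t * b := by fun_prop
    simpa using (hc.tendsto 0).mono_left nhdsWithin_le_nhds
  refine ge_of_tendsto hlim ?_
  filter_upwards [Ioc_mem_nhdsGT one_pos] with t ht using h t ht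

namespace Matrix

section QuadraticForm

variable {ι : Type*} [Fintype ι]

theorem IsSymm.dotProduct_mulVec_comm {R : Type*} [CommSemiring R] {C : Matrix ι ι R}
    (hC : C.IsSymm) (u v : ι → R) : u ⬝ᵥ C *ᵥ v = v ⬝ᵥ C *ᵥ u := by
  rw [dotProduct_mulVec, ← mulVec_transpose, hC, dotProduct_comm]

theorem IsSymm.dotProduct_mulVec_add_smul {C : Matrix ι ι ℝ} (hC : C.IsSymm) (d w : ι → ℝ)
    (t : ℝ) : (d + t • w) ⬝ᵥ C *ᵥ (d + t • w) =
      d ⬝ᵥ C *ᵥ d + 2 * t * (w ⬝ᵥ C *ᵥ d) + t ^ 2 * (w ⬝ᵥ C *ᵥ w) := by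
  simp only [mulVec_add, mulVec_smul, add_dotProduct, dotProduct_add, smul_dotProduct,
    dotProduct_smul, smul_eq_mul, hC.dotProduct_mulVec_comm d w]
  ring

theorem IsSymm.dotProduct_mulVec_le_of_isMinOn {C : Matrix ι ι ℝ} (hC : C.IsSymm)
    {K : Set (ι → ℝ)} (hK : Convex ℝ K) {d w : ι → ℝ} (hd : d ∈ K) (hw : w ∈ K)
    (hmin : IsMinOn (fun x => x ⬝ᵥ C *ᵥ x) K d) : d ⬝ᵥ C *ᵥ d ≤ w ⬝ᵥ C *ᵥ d := by
  suffices 0 ≤ 2 * ((w - d) ⬝ᵥ C *ᵥ d) by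
    rw [sub_dotProduct] at this
    linarith
  refine nonneg_of_forall_nonneg_add_mul (b := (w - d) ⬝ᵥ C *ᵥ (w - d)) fun t ht => ?_
  have hle : d ⬝ᵥ C *ᵥ d ≤ (d + t • (w - d)) ⬝ᵥ C *ᵥ (d + t • (w - d)) :=
    hmin (hK.add_smul_sub_mem hd hw ⟨ht.1.le, ht.2⟩)
  rw [hC.dotProduct_mulVec_add_smul] at hle
  nlinarith [ht.1]

theorem IsSymm.dotProduct_mulVec_nonneg_of_pos_mulVec_nonneg {C : Matrix ι ι ℝ} (hC : C.IsSymm)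
    (hZ : ∀ i j, i ≠ j → C i j ≤ 0) {g : ι → ℝ} (hg : ∀ i, 0 < g i) (hCg : 0 ≤ C *ᵥ g)
    (x : ι → ℝ) : 0 ≤ x ⬝ᵥ C *ᵥ x := by
  set y : ι → ℝ := fun i => x i / g i
  have hx : x = fun i => g i * y i := funext fun i => (mul_div_cancel₀ _ (hg i).ne').symm
  set T : ι → ι → ℝ := fun i j => C i j * (g i * g j)
  have hquad : x ⬝ᵥ C *ᵥ x = ∑ i, ∑ j, T i j * (y i * y j) := by
    simp only [hx, dotProduct, mulVec, mul_sum, T]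
    exact sum_congr rfl fun i _ => sum_congr rfl fun j _ => by ring
  have hrow : ∑ i, ∑ j, T i j * y i ^ 2 = ∑ i, g i * y i ^ 2 * (C *ᵥ g) i := by
    simp only [mulVec, dotProduct, mul_sum, T]
    exact sum_congr rfl fun i _ => sum_congr rfl fun j _ => by ring
  have hcol : ∑ i, ∑ j, T i j * y j ^ 2 = ∑ i, ∑ j, T i j * y i ^ 2 := by
    rw [sum_comm]
    exact sum_congr rfl fun i _ => sum_congr rfl fun j _ => by simp only [T, hC.apply]; ring
  have hsq : ∑ i, ∑ j, T i j * (y i - y j) ^ 2 = ∑ i, ∑ j, T i j * y i ^ 2 +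
      ∑ i, ∑ j, T i j * y j ^ 2 - 2 * ∑ i, ∑ j, T i j * (y i * y j) := by
    simp only [← sum_add_distrib, mul_sum, ← sum_sub_distrib]
    exact sum_congr rfl fun i _ => sum_congr rfl fun j _ => by ring
  have hsq_nonpos : ∑ i, ∑ j, T i j * (y i - y j) ^ 2 ≤ 0 :=
    sum_nonpos fun i _ => sum_nonpos fun j _ => by
      rcases eq_or_ne i j with rfl | hij
      · simp
      · exact mul_nonpos_of_nonpos_of_nonneg
          (mul_nonpos_of_nonpos_of_nonneg (hZ i j hij) (mul_pos (hg i) (hg j)).le) (sq_nonneg _)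
  have hrow_nonneg : 0 ≤ ∑ i, g i * y i ^ 2 * (C *ᵥ g) i :=
    sum_nonneg fun i _ => mul_nonneg (mul_nonneg (hg i).le (sq_nonneg _)) (hCg i)
  linarith

theorem mulVec_le_mulVec_of_le {A B : Matrix ι ι ℝ} (hAB : ∀ i j, A i j ≤ B i j) {v : ι → ℝ}
    (hv : 0 ≤ v) : A *ᵥ v ≤ B *ᵥ v := fun i =>
  sum_le_sum fun j _ => mul_le_mul_of_nonneg_right (hAB i j) (hv j)

variable [DecidableEq ι]

theorem IsSymm.exists_nonneg_quadForm_le_mulVec_apply {C : Matrix ι ι ℝ} (hC : C.IsSymm)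
    {s : Finset ι} (hs : s.Nonempty) :
    ∃ d : ι → ℝ, (∀ i, 0 ≤ d i) ∧ (∀ i ∉ s, d i = 0) ∧ (∃ i ∈ s, 0 < d i) ∧
      ∀ i ∈ s, d ⬝ᵥ C *ᵥ d ≤ (C *ᵥ d) i := by
  set K := stdSimplex ℝ ι ∩ (↑s : Set ι)ᶜ.pi fun _ => {0}
  have hK : Convex ℝ K := (convex_stdSimplex ℝ ι).inter (convex_pi fun _ _ => convex_singleton 0)
  have hsingle : ∀ i ∈ s, Pi.single i 1 ∈ K := fun i hi =>
    ⟨single_mem_stdSimplex ℝ i, fun j hj => Pi.single_eq_of_ne (by rintro rfl; exact hj hi) _⟩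
  obtain ⟨i₀, hi₀⟩ := hs
  have hKc : IsCompact K :=
    (isCompact_stdSimplex ℝ ι).inter_right (isClosed_set_pi fun _ _ => isClosed_singleton)
  obtain ⟨d, ⟨⟨hd0, hd1⟩, hds⟩, hmin⟩ := hKc.exists_isMinOn ⟨_, hsingle i₀ hi₀⟩
    (by fun_prop : Continuous fun x : ι → ℝ => x ⬝ᵥ C *ᵥ x).continuousOn
  have hds' : ∀ i ∉ s, d i = 0 := fun i hi => hds i hi
  refine ⟨d, hd0, hds', ?_, fun i hi => ?_⟩
  · obtain ⟨i, -, hi⟩ := Finset.exists_lt_of_sum_lt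
      (by rw [sum_const_zero, hd1]; exact one_pos : ∑ _ : ι, (0 : ℝ) < ∑ i, d i)
    exact ⟨i, by_contra fun h => hi.ne' (hds' i h), hi⟩
  · simpa [single_one_dotProduct] using
      hC.dotProduct_mulVec_le_of_isMinOn hK ⟨⟨hd0, hd1⟩, hds⟩ (hsingle i hi) hmin

theorem IsSymm.exists_pos_on_mulVec_nonneg_on {C : Matrix ι ι ℝ} (hC : C.IsSymm)
    (hZ : ∀ i j, i ≠ j → C i j ≤ 0) (hpsd : ∀ x, 0 ≤ x ⬝ᵥ C *ᵥ x) (s : Finset ι) :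
    ∃ g : ι → ℝ, (∀ i ∈ s, 0 < g i) ∧ (∀ i ∉ s, g i = 0) ∧ ∀ i ∈ s, 0 ≤ (C *ᵥ g) i := by
  induction s using Finset.strongInduction with
  | _ s ih =>
  rcases s.eq_empty_or_nonempty with rfl | hs
  · exact ⟨0, by simp, by simp, by simp⟩
  obtain ⟨d, hd0, hds, ⟨j₀, hj₀s, hj₀⟩, hkkt⟩ := hC.exists_nonneg_quadForm_le_mulVec_apply hs
  have hCd : ∀ i ∈ s, 0 ≤ (C *ᵥ d) i := fun i hi => (hpsd d).trans (hkkt i hi)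
  set S := s.filter fun i => d i = 0
  have hSs : S ⊂ s := Finset.ssubset_iff_of_subset (filter_subset _ _) |>.2
    ⟨j₀, hj₀s, fun h => hj₀.ne' (mem_filter.1 h).2⟩
  have hdecouple : ∀ i ∈ S, ∀ j, C i j * d j = 0 := by
    intro i hi
    obtain ⟨his, hdi⟩ := mem_filter.1 hi
    have hterm : ∀ j ∈ univ, C i j * d j ≤ 0 := fun j _ => by
      rcases eq_or_ne i j with rfl | hij
      · simp [hdi]
      · exact mul_nonpos_of_nonpos_of_nonneg (hZ i j hij) (hd0 j)
    have hsum : ∑ j, C i j * d j = 0 := le_antisymm (sum_nonpos hterm) (hCd i his)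
    exact fun j => (sum_eq_zero_iff_of_nonpos hterm).1 hsum j (mem_univ j)
  obtain ⟨h, hhS, hhS', hCh⟩ := ih S hSs
  have hh0 : ∀ i, 0 ≤ h i := fun i => by
    by_cases hi : i ∈ S
    · exact (hhS i hi).le
    · exact (hhS' i hi).ge
  refine ⟨d + h, fun i hi => ?_, fun i hi => ?_, fun i hi => ?_⟩
  · by_cases hiS : i ∈ S
    · simpa [(mem_filter.1 hiS).2] using hhS i hiS
    · exact add_pos_of_pos_of_nonneg
        ((hd0 i).lt_of_ne' fun h => hiS (mem_filter.2 ⟨hi, h⟩)) (hh0 i)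
  · simp [hds i hi, hhS' i fun h => hi (hSs.subset h)]
  · rw [mulVec_add, Pi.add_apply]
    by_cases hiS : i ∈ S
    · exact add_nonneg (hCd i hi) (hCh i hiS)
    · have hdi : d i ≠ 0 := fun h => hiS (mem_filter.2 ⟨hi, h⟩)
      have hChi : (C *ᵥ h) i = 0 := sum_eq_zero fun j _ => by
        show C i j * h j = 0
        by_cases hjS : j ∈ S
        · rw [← hC.apply, (mul_eq_zero.1 (hdecouple j hjS i)).resolve_right hdi, zero_mul]
        · rw [hhS' j hjS, mul_zero]
      rw [hChi, add_zero]
      exact hCd i hi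

theorem IsSymm.exists_pos_mulVec_nonneg {C : Matrix ι ι ℝ} (hC : C.IsSymm)
    (hZ : ∀ i j, i ≠ j → C i j ≤ 0) (hpsd : ∀ x, 0 ≤ x ⬝ᵥ C *ᵥ x) :
    ∃ g : ι → ℝ, (∀ i, 0 < g i) ∧ 0 ≤ C *ᵥ g := by
  obtain ⟨g, hg, -, hCg⟩ := hC.exists_pos_on_mulVec_nonneg_on hZ hpsd univ
  exact ⟨g, fun i => hg i (mem_univ i), fun i => hCg i (mem_univ i)⟩

end QuadraticForm

variable {ι : Type*} [DecidableEq ι]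

def comparison_s4 (A : Matrix ι ι ℝ) : Matrix ι ι ℝ :=
  of fun i j => if i = j then A i i else -|A i j|

theorem comparison_apply_self (A : Matrix ι ι ℝ) (i : ι) : comparison_s4 A i i = A i i := if_pos rfl

theorem comparison_apply_of_ne (A : Matrix ι ι ℝ) {i j : ι} (h : i ≠ j) :
    comparison_s4 A i j = -|A i j| := if_neg h

theorem comparison_apply_nonpos_of_ne (A : Matrix ι ι ℝ) {i j : ι} (h : i ≠ j) :
    comparison_s4 A i j ≤ 0 := by
  rw [comparison_apply_of_ne A h]
  exact neg_nonpos.2 (abs_nonneg _)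

theorem IsSymm.comparison_s4 {A : Matrix ι ι ℝ} (hA : A.IsSymm) : (comparison_s4 A).IsSymm := by
  refine IsSymm.ext fun i j => ?_
  rcases eq_or_ne i j with rfl | h
  · rfl
  · rw [comparison_apply_of_ne A h, comparison_apply_of_ne A h.symm, hA.apply]

theorem comparison_add_le (A B : Matrix ι ι ℝ) (i j : ι) :
    comparison_s4 A i j + comparison_s4 B i j ≤ comparison_s4 (A + B) i j := by
  rcases eq_or_ne i j with rfl | h
  · simp only [comparison_apply_self, add_apply, le_refl]
  · simp only [comparison_apply_of_ne _ h, add_apply]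
    linarith [abs_add_le (A i j) (B i j)]

theorem comparison_smul {c : ℝ} (hc : 0 ≤ c) (A : Matrix ι ι ℝ) :
    comparison_s4 (c • A) = c • comparison_s4 A := by
  ext i j
  rcases eq_or_ne i j with rfl | h
  · simp only [comparison_apply_self, smul_apply]
  · simp [comparison_apply_of_ne _ h, abs_mul, abs_of_nonneg hc]

variable [Fintype ι]

theorem comparison_mulVec_apply_s4 (A : Matrix ι ι ℝ) (v : ι → ℝ) (i : ι) :
    (comparison_s4 A *ᵥ v) i = A i i * v i - ∑ j ∈ univ.erase i, |A i j| * v j := by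
  rw [mulVec, dotProduct, ← add_sum_erase univ _ (mem_univ i), comparison_apply_self,
    sub_eq_add_neg, ← sum_neg_distrib]
  congr 1
  refine sum_congr rfl fun j hj => ?_
  rw [comparison_apply_of_ne A (ne_of_mem_erase hj).symm, neg_mul]

theorem diagonal_mul_mul_diagonal_apply (d e : ι → ℝ) (A : Matrix ι ι ℝ) (i j : ι) :
    (diagonal d * A * diagonal e) i j = d i * A i j * e j := by
  rw [mul_diagonal, diagonal_mul]

end Matrix

section SDD

variable {n : ℕ}

theorem diagonal_mul_mul_diagonal_mem_DD_iff {A : Matrix (Fin n) (Fin n) ℝ} (hA : A.IsSymm)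
    {D : Fin n → ℝ} (hD : ∀ i, 0 < D i) :
    diagonal D * A * diagonal D ∈ DD n ↔ 0 ≤ comparison_s4 A *ᵥ D := by
  have hsymm : (diagonal D * A * diagonal D).IsSymm := IsSymm.ext fun i j => by
    simp only [diagonal_mul_mul_diagonal_apply, hA.apply]
    ring
  have hrow : ∀ i, ∑ j ∈ univ.erase i, |(diagonal D * A * diagonal D) i j| ≤
      (diagonal D * A * diagonal D) i i ↔ 0 ≤ (comparison_s4 A *ᵥ D) i := fun i => by
    simp only [diagonal_mul_mul_diagonal_apply, abs_mul, abs_of_pos (hD _),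
      comparison_mulVec_apply_s4, sub_nonneg, mul_assoc, ← mul_sum]
    exact mul_le_mul_iff_right₀ (hD i)
  exact ⟨fun h i => (hrow i).1 (h.2 i), fun h => ⟨hsymm, fun i => (hrow i).2 (h i)⟩⟩

theorem mem_SDD_iff {A : Matrix (Fin n) (Fin n) ℝ} :
    A ∈ SDD n ↔ A.IsSymm ∧ ∃ D : Fin n → ℝ, (∀ i, 0 < D i) ∧ 0 ≤ comparison_s4 A *ᵥ D :=
  and_congr_right fun hA => exists_congr fun _ =>
    and_congr_right fun hD => diagonal_mul_mul_diagonal_mem_DD_iff hA hD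

theorem dotProduct_comparison_mulVec_nonneg_of_mem_SDD {A : Matrix (Fin n) (Fin n) ℝ}
    (hA : A ∈ SDD n) (x : Fin n → ℝ) : 0 ≤ x ⬝ᵥ comparison_s4 A *ᵥ x := by
  obtain ⟨hAs, D, hD, hCD⟩ := mem_SDD_iff.1 hA
  exact hAs.comparison_s4.dotProduct_mulVec_nonneg_of_pos_mulVec_nonneg
    (fun _ _ => comparison_apply_nonpos_of_ne A) hD hCD x

theorem zero_mem_SDD : (0 : Matrix (Fin n) (Fin n) ℝ) ∈ SDD n :=
  mem_SDD_iff.2 ⟨isSymm_zero, fun _ => 1, fun _ => one_pos, fun i => by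
    simp [comparison_mulVec_apply_s4]⟩

theorem add_mem_SDD {A B : Matrix (Fin n) (Fin n) ℝ} (hA : A ∈ SDD n) (hB : B ∈ SDD n) :
    A + B ∈ SDD n := by
  have hAs := (mem_SDD_iff.1 hA).1
  have hBs := (mem_SDD_iff.1 hB).1
  have hpsd (x : Fin n → ℝ) : 0 ≤ x ⬝ᵥ (comparison_s4 A + comparison_s4 B) *ᵥ x := by
    rw [add_mulVec, dotProduct_add]
    exact add_nonneg (dotProduct_comparison_mulVec_nonneg_of_mem_SDD hA x)
      (dotProduct_comparison_mulVec_nonneg_of_mem_SDD hB x)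
  obtain ⟨g, hg, hCg⟩ := (hAs.comparison_s4.add hBs.comparison_s4).exists_pos_mulVec_nonneg
    (fun _ _ h => add_nonpos (comparison_apply_nonpos_of_ne A h)
      (comparison_apply_nonpos_of_ne B h)) hpsd
  exact mem_SDD_iff.2 ⟨hAs.add hBs, g, hg,
    hCg.trans (mulVec_le_mulVec_of_le (comparison_add_le A B) fun i => (hg i).le)⟩

theorem smul_mem_SDD {c : ℝ} (hc : 0 ≤ c) {A : Matrix (Fin n) (Fin n) ℝ} (hA : A ∈ SDD n) :
    c • A ∈ SDD n := by
  obtain ⟨hAs, D, hD, hCD⟩ := mem_SDD_iff.1 hA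
  refine mem_SDD_iff.2 ⟨hAs.smul c, D, hD, ?_⟩
  rw [comparison_smul hc, smul_mulVec]
  exact smul_nonneg hc hCD

end SDD

theorem stmt4_general (n : ℕ) :
    (0 : Matrix (Fin n) (Fin n) ℝ) ∈ SDD n ∧
    (∀ A B, A ∈ SDD n → B ∈ SDD n → A + B ∈ SDD n) ∧
    (∀ (c : ℝ) A, 0 ≤ c → A ∈ SDD n → c • A ∈ SDD n) :=
  ⟨zero_mem_SDD, fun _ _ => add_mem_SDD, fun _ _ hc hA => smul_mem_SDD hc hA⟩

/-- `SDD_n` is a convex cone: it contains `0`, is closed under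
addition, and is closed under multiplication by nonnegative scalars. -/
theorem stmt4 (n : ℕ) (hn : 0 < n) :
    (0 : Matrix (Fin n) (Fin n) ℝ) ∈ SDD n ∧
    (∀ A B, A ∈ SDD n → B ∈ SDD n → A + B ∈ SDD n) ∧
    (∀ (c : ℝ) A, 0 ≤ c → A ∈ SDD n → c • A ∈ SDD n) :=
  stmt4_general n
end
end

section
/- For every positive integer n, S^n_+ = cone(⋃_{P ∈ O^n} {PᵀXP : X ∈ B_+}) and S^n_+ = cone(⋃_{P ∈ O^n} {PᵀXP : X ∈ B_-}), where O^n is the set of n×n real orthogonal matrices. -/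
open Matrix Finset

noncomputable section

/-! Every orthogonal conjugate `Pᵀ (v vᵀ) P` is positive semidefinite,
and so is every conic combination of such matrices. Conversely, the spectral theorem writes a
positive semidefinite `X` as `Pᵀ diag(λ) P` with `P` orthogonal and `λ ≥ 0`, and
`diag(λ) = ∑ᵢ (λᵢ / 4) (eᵢ + eᵢ)(eᵢ + eᵢ)ᵀ`, whose summands lie in both `B_+` and `B_-`. -/

lemma mem_PSDcone_iff {n : ℕ} {X : Matrix (Fin n) (Fin n) ℝ} :
    X ∈ PSDcone n ↔ X.PosSemidef := by
  simp [PSDcone, posSemidef_iff_dotProduct_mulVec, isHermitian_iff_isSymm]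

section

variable {m k : Type*} [Fintype m] [Fintype k]

lemma posSemidef_transpose_mul_mul_same {A : Matrix m m ℝ}
    (hA : A.PosSemidef) (P : Matrix m k ℝ) : (Pᵀ * A * P).PosSemidef := by
  simpa [conjTranspose_eq_transpose_of_trivial] using hA.conjTranspose_mul_mul_same P

lemma posSemidef_vecMulVec_self (v : m → ℝ) : (vecMulVec v v).PosSemidef := by
  simpa using posSemidef_vecMulVec_self_star v

end

lemma vecMulVec_add_self_add_self {m : Type*} (v : m → ℝ) :
    vecMulVec (v + v) (v + v) = (4 : ℝ) • vecMulVec v v := by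
  rw [← two_smul ℝ v, smul_vecMulVec, vecMulVec_smul, smul_smul]
  norm_num

lemma coneHull_subset_PSDcone {n : ℕ} {K : Set (Matrix (Fin n) (Fin n) ℝ)}
    (hK : ∀ M ∈ K, M.PosSemidef) : coneHull K ⊆ PSDcone n := by
  rintro X ⟨k, c, M, hc, hM, rfl⟩
  exact mem_PSDcone_iff.mpr <| posSemidef_sum _ fun i _ => (hK _ (hM i)).smul (hc i)

lemma diagonal_eq_sum_smul_vecMulVec {n : ℕ} (d : Fin n → ℝ) :
    diagonal d = ∑ i, d i • vecMulVec (e i) (e i) := by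
  simp_rw [e, ← single_eq_single_vecMulVec_single, smul_single, smul_eq_mul, mul_one,
    sum_single_eq_diagonal]

lemma Matrix.PosSemidef.exists_orthogonal_eq_sum {n : ℕ} {X : Matrix (Fin n) (Fin n) ℝ}
    (hX : X.PosSemidef) : ∃ P : Matrix (Fin n) (Fin n) ℝ, Pᵀ * P = 1 ∧
      ∃ c : Fin n → ℝ, (∀ i, 0 ≤ c i) ∧ X = ∑ i, c i • (Pᵀ * vecMulVec (e i) (e i) * P) := by
  have hspec := hX.1.spectral_theorem
  rw [Unitary.conjStarAlgAut_apply, RCLike.ofReal_real_eq_id, Function.id_comp] at hspec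
  set U : Matrix (Fin n) (Fin n) ℝ := (hX.1.eigenvectorUnitary : Matrix (Fin n) (Fin n) ℝ)
  have hUt : star U = Uᵀ := conjTranspose_eq_transpose_of_trivial U
  refine ⟨Uᵀ, ?_, hX.1.eigenvalues, hX.eigenvalues_nonneg, ?_⟩
  · rw [transpose_transpose, ← hUt]
    exact mem_unitaryGroup_iff.mp hX.1.eigenvectorUnitary.2
  · rw [transpose_transpose, ← hUt]
    conv_lhs => rw [hspec, diagonal_eq_sum_smul_vecMulVec, mul_sum, sum_mul]
    simp only [Matrix.mul_smul, Matrix.smul_mul]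

def orthogonalConjugates {n : ℕ} (B : Set (Matrix (Fin n) (Fin n) ℝ)) :
    Set (Matrix (Fin n) (Fin n) ℝ) :=
  ⋃ P ∈ {P : Matrix (Fin n) (Fin n) ℝ | Pᵀ * P = 1}, {M | ∃ X ∈ B, M = Pᵀ * X * P}

lemma coneHull_orthogonalConjugates_eq_PSDcone {n : ℕ} {B : Set (Matrix (Fin n) (Fin n) ℝ)}
    (hB : ∀ X ∈ B, X.PosSemidef) (hdiag : ∀ i, vecMulVec (e i + e i) (e i + e i) ∈ B) :
    coneHull (orthogonalConjugates B) = PSDcone n := by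
  refine Set.Subset.antisymm (coneHull_subset_PSDcone ?_) fun X hX => ?_
  · intro M hM
    obtain ⟨P, -, Y, hY, rfl⟩ := Set.mem_iUnion₂.mp hM
    exact posSemidef_transpose_mul_mul_same (hB Y hY) P
  · obtain ⟨P, hP, c, hc, rfl⟩ := (mem_PSDcone_iff.mp hX).exists_orthogonal_eq_sum
    refine ⟨n, fun i => c i / 4, fun i => Pᵀ * vecMulVec (e i + e i) (e i + e i) * P,
      fun i => div_nonneg (hc i) zero_le_four,
      fun i => Set.mem_iUnion₂.mpr ⟨P, hP, _, hdiag i, rfl⟩, ?_⟩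
    refine sum_congr rfl fun i _ => ?_
    dsimp only
    rw [vecMulVec_add_self_add_self, Matrix.mul_smul, Matrix.smul_mul, smul_smul]
    norm_num

lemma posSemidef_of_mem_Bplus {n : ℕ} {X : Matrix (Fin n) (Fin n) ℝ} (hX : X ∈ Bplus n) :
    X.PosSemidef := by
  obtain ⟨i, j, -, rfl⟩ := hX
  exact posSemidef_vecMulVec_self _

lemma posSemidef_of_mem_Bminus {n : ℕ} {X : Matrix (Fin n) (Fin n) ℝ} (hX : X ∈ Bminus n) :
    X.PosSemidef := by
  obtain ⟨i, rfl⟩ | ⟨i, j, -, rfl⟩ := hX <;> exact posSemidef_vecMulVec_self _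

theorem stmt8_general (n : ℕ) :
    PSDcone n =
      coneHull (⋃ P ∈ {P : Matrix (Fin n) (Fin n) ℝ | Pᵀ * P = 1},
        {M | ∃ X ∈ Bplus n, M = Pᵀ * X * P}) ∧
    PSDcone n =
      coneHull (⋃ P ∈ {P : Matrix (Fin n) (Fin n) ℝ | Pᵀ * P = 1},
        {M | ∃ X ∈ Bminus n, M = Pᵀ * X * P}) :=
  ⟨(coneHull_orthogonalConjugates_eq_PSDcone (fun _ => posSemidef_of_mem_Bplus)
      fun i => ⟨i, i, le_rfl, rfl⟩).symm,
    (coneHull_orthogonalConjugates_eq_PSDcone (fun _ => posSemidef_of_mem_Bminus)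
      fun i => Or.inl ⟨i, rfl⟩).symm⟩

/-- `S^n_+` equals the conical hull of all orthogonal conjugates
of `B_+`, and also of all orthogonal conjugates of `B_-`. -/
theorem stmt8 (n : ℕ) (hn : 0 < n) :
    PSDcone n =
      coneHull (⋃ P ∈ {P : Matrix (Fin n) (Fin n) ℝ | Pᵀ * P = 1},
        {M | ∃ X ∈ Bplus n, M = Pᵀ * X * P}) ∧
    PSDcone n =
      coneHull (⋃ P ∈ {P : Matrix (Fin n) (Fin n) ℝ | Pᵀ * P = 1},
        {M | ∃ X ∈ Bminus n, M = Pᵀ * X * P}) :=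
  stmt8_general n
end
end

section
/- For every positive integer n, cone(B_+ ∪ B_-) = DD_n: the conical hull of the union of the two SD bases equals the set of diagonally dominant symmetric matrices. -/
open Matrix Finset

noncomputable section

/-!
Every element of `B_+ ∪ B_-` is `u uᵀ` with `u` supported on two coordinates of equal modulus,
and such a matrix is diagonally dominant; since `DD_n` is a convex cone, the cone generated
by the SD bases lies in it. Conversely, a symmetric `A` splits as
`A = ∑_{i<j} |A i j| (e_i ± e_j)(e_i ± e_j)ᵀ + ∑_i (A i i - ∑_{j≠i} |A i j|)/4 · (2e_i)(2e_i)ᵀ`,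
the sign matching that of `A i j`, and diagonal dominance is exactly nonnegativity of the
coefficients.
-/

theorem coneHull_eq_hull {n : ℕ} (K : Set (Matrix (Fin n) (Fin n) ℝ)) :
    coneHull K = PointedCone.hull ℝ K := by
  ext X
  rw [SetLike.mem_coe, Submodule.mem_span_set']
  constructor
  · rintro ⟨k, c, M, hc, hM, rfl⟩
    exact ⟨k, fun i ↦ ⟨c i, hc i⟩, fun i ↦ ⟨M i, hM i⟩, rfl⟩
  · rintro ⟨k, c, M, rfl⟩
    exact ⟨k, fun i ↦ c i, fun i ↦ M i, fun i ↦ (c i).2, fun i ↦ (M i).2, rfl⟩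

def DD.pointedCone (n : ℕ) : PointedCone ℝ (Matrix (Fin n) (Fin n) ℝ) where
  carrier := DD n
  zero_mem' := ⟨by simp [Matrix.IsSymm], fun i ↦ by simp⟩
  add_mem' := fun {A B} hA hB ↦ ⟨hA.1.add hB.1, fun i ↦
    calc ∑ j ∈ univ.erase i, |(A + B) i j|
        ≤ ∑ j ∈ univ.erase i, (|A i j| + |B i j|) := sum_le_sum fun j _ ↦ abs_add_le _ _
      _ ≤ A i i + B i i := by rw [sum_add_distrib]; exact add_le_add (hA.2 i) (hB.2 i)⟩
  smul_mem' := fun ⟨c, hc⟩ A hA ↦ ⟨hA.1.smul c, fun i ↦ by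
    simpa [abs_mul, abs_of_nonneg hc, ← mul_sum] using mul_le_mul_of_nonneg_left (hA.2 i) hc⟩

theorem vecMulVec_self_mem_DD {n : ℕ} {u : Fin n → ℝ}
    (hu : ∀ a, u a ≠ 0 → ∑ b, |u b| ≤ 2 * |u a|) : vecMulVec u u ∈ DD n := by
  refine ⟨by ext a b; simp [vecMulVec_apply, mul_comm], fun a ↦ ?_⟩
  simp only [vecMulVec_apply, abs_mul, ← mul_sum, sum_erase_eq_sub (mem_univ a)]
  by_cases ha : u a = 0
  · simp [ha]
  · nlinarith [hu a ha, abs_mul_abs_self (u a), abs_nonneg (u a)]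

theorem vecMulVec_self_mem_DD_of_support_pair {n : ℕ} {u : Fin n → ℝ} (i j : Fin n)
    (hu : ∀ b, b ≠ i → b ≠ j → u b = 0) (hij : |u i| = |u j|) : vecMulVec u u ∈ DD n := by
  have hsum : ∑ b, |u b| ≤ 2 * |u i| := by
    by_cases h : i = j
    · subst h
      rw [Fintype.sum_eq_single i fun b hb ↦ by simp [hu b hb hb]]
      linarith [abs_nonneg (u i)]
    · rw [Fintype.sum_eq_add i j h fun b ⟨hbi, hbj⟩ ↦ by simp [hu b hbi hbj], ← hij]
      exact (two_mul _).ge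
  refine vecMulVec_self_mem_DD fun a ha ↦ ?_
  by_cases hai : a = i
  · rwa [hai]
  · have haj : a = j := by by_contra haj; exact ha (hu a hai haj)
    rwa [haj, ← hij]

theorem Bplus_union_Bminus_subset_DD (n : ℕ) : Bplus n ∪ Bminus n ⊆ DD n := by
  rintro M (⟨i, j, -, rfl⟩ | ⟨i, rfl⟩ | ⟨i, j, hij, rfl⟩)
  · refine vecMulVec_self_mem_DD_of_support_pair i j (fun b hbi hbj ↦ by simp [e, hbi, hbj]) ?_
    rcases eq_or_ne i j with rfl | hij
    · rfl
    · simp [e, hij, hij.symm]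
  · exact vecMulVec_self_mem_DD_of_support_pair i i (fun b hbi _ ↦ by simp [e, hbi]) rfl
  · exact vecMulVec_self_mem_DD_of_support_pair i j (fun b hbi hbj ↦ by simp [e, hbi, hbj])
      (by simp [e, hij.ne, hij.ne'])

theorem sum_sum_Ioi_add_swap {ι M : Type*} [Fintype ι] [LinearOrder ι] [LocallyFiniteOrderTop ι]
    [LocallyFiniteOrderBot ι] [AddCommMonoid M] (f : ι → ι → M) :
    ∑ i, ∑ j ∈ Ioi i, (f i j + f j i) = ∑ i, ∑ j ∈ univ.erase i, f i j := by
  simp only [sum_add_distrib]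
  rw [sum_comm' (f := fun i j ↦ f j i) (s' := fun j ↦ Iio j) (t' := univ) (by simp),
    ← sum_add_distrib]
  refine sum_congr rfl fun i _ ↦ ?_
  rw [← sum_union (disjoint_left.2 fun j hj hj' ↦ (mem_Ioi.1 hj).asymm (mem_Iio.1 hj'))]
  congr 1
  ext j
  simp [eq_comm]

theorem vecMulVec_e_e {n : ℕ} (i j : Fin n) : vecMulVec (e i) (e j) = single i j (1 : ℝ) :=
  (single_eq_single_vecMulVec_single i j).symm

theorem vecMulVec_e_add_smul_e {n : ℕ} (i j : Fin n) (s : ℝ) :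
    vecMulVec (e i + s • e j) (e i + s • e j) =
      single i i 1 + s • (single i j 1 + single j i 1) + (s * s) • single j j 1 := by
  simp only [add_vecMulVec, vecMulVec_add, smul_vecMulVec, vecMulVec_smul, vecMulVec_e_e]
  module

/-- The SD basis matrix on `{i, j}` whose off-diagonal entries have the sign of `A i j`. -/
def signedSD {n : ℕ} (A : Matrix (Fin n) (Fin n) ℝ) (i j : Fin n) : Matrix (Fin n) (Fin n) ℝ :=
  if 0 ≤ A i j then vecMulVec (e i + e j) (e i + e j) else vecMulVec (e i - e j) (e i - e j)

theorem signedSD_mem {n : ℕ} (A : Matrix (Fin n) (Fin n) ℝ) {i j : Fin n} (hij : i < j) :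
    signedSD A i j ∈ Bplus n ∪ Bminus n := by
  unfold signedSD
  split_ifs
  · exact .inl ⟨i, j, hij.le, rfl⟩
  · exact .inr (.inr ⟨i, j, hij, rfl⟩)

theorem abs_smul_signedSD {n : ℕ} (A : Matrix (Fin n) (Fin n) ℝ) (i j : Fin n) :
    |A i j| • signedSD A i j =
      |A i j| • (single i i 1 + single j j 1) + A i j • (single i j 1 + single j i 1) := by
  unfold signedSD
  split_ifs with h
  · rw [← one_smul ℝ (e j), vecMulVec_e_add_smul_e, abs_of_nonneg h]
    module
  · rw [sub_eq_add_neg, ← neg_one_smul ℝ (e j), vecMulVec_e_add_smul_e, abs_of_neg (not_le.1 h)]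
    module

theorem eq_sum_diag_add_sum_signedSD {n : ℕ} {A : Matrix (Fin n) (Fin n) ℝ} (hA : A.IsSymm) :
    A = ∑ i, ((A i i - ∑ j ∈ univ.erase i, |A i j|) / 4) • vecMulVec (e i + e i) (e i + e i) +
      ∑ i, ∑ j ∈ Ioi i, |A i j| • signedSD A i j := by
  have hdiag (i : Fin n) (c : ℝ) :
      (c / 4) • vecMulVec (e i + e i) (e i + e i) = c • single i i (1 : ℝ) := by
    rw [← two_smul ℝ (e i), smul_vecMulVec, vecMulVec_smul, vecMulVec_e_e]
    module
  have hoff : ∑ i, ∑ j ∈ Ioi i, |A i j| • signedSD A i j =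
      ∑ i, ∑ j ∈ univ.erase i, (|A i j| • single i i (1 : ℝ) + A i j • single i j 1) := by
    rw [← sum_sum_Ioi_add_swap]
    refine sum_congr rfl fun i _ ↦ sum_congr rfl fun j _ ↦ ?_
    rw [abs_smul_signedSD, hA.apply i j]
    module
  conv_lhs => rw [matrix_eq_sum_single A]
  simp only [hdiag, hoff, ← sum_add_distrib, sum_add_distrib (s := univ.erase _), ← sum_smul]
  refine sum_congr rfl fun i _ ↦ ?_
  rw [← add_sum_erase _ _ (mem_univ i)]
  simp only [smul_single, smul_eq_mul, mul_one]
  rw [← add_assoc, ← single_add, sub_add_cancel]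

theorem stmt9_general (n : ℕ) :
    coneHull (Bplus n ∪ Bminus n) = DD n := by
  rw [coneHull_eq_hull]
  refine subset_antisymm (Submodule.span_le (p := DD.pointedCone n) |>.2
    (Bplus_union_Bminus_subset_DD n)) fun A hA ↦ ?_
  have hdiag (i : Fin n) : vecMulVec (e i + e i) (e i + e i) ∈ Bplus n ∪ Bminus n :=
    .inr (.inl ⟨i, rfl⟩)
  rw [eq_sum_diag_add_sum_signedSD hA.1]
  refine add_mem (sum_mem fun i _ ↦ ?_) (sum_mem fun i _ ↦ sum_mem fun j hj ↦ ?_)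
  · exact PointedCone.smul_mem _ (div_nonneg (sub_nonneg.2 (hA.2 i)) zero_le_four)
      (PointedCone.subset_hull (hdiag i))
  · exact PointedCone.smul_mem _ (abs_nonneg _)
      (PointedCone.subset_hull (signedSD_mem A (mem_Ioi.1 hj)))

/-- `cone(B_+ ∪ B_-) = DD_n`. -/
theorem stmt9 (n : ℕ) (hn : 0 < n) :
    coneHull (Bplus n ∪ Bminus n) = DD n :=
  stmt9_general n
end
end

section
/- For every positive integer n, every α ∈ ℝ, and all indices 1 ≤ i < j ≤ n, the expanded SD basis matrix decomposes as B̄_{i,j}(α) = α·B⁺_{i,j} + ((1−α)/4)·B⁺_{i,i} + (α(α−1)/4)·B⁺_{j,j}; moreover, for every 1 ≤ i ≤ n, B̄_{i,i}(α) = ((1+α)²/4)·B⁺_{i,i}. -/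
open Matrix Finset

noncomputable section

/-- decomposition of the expanded SD basis matrices in terms of
the SD basis of Type I. -/
theorem stmt10 (n : ℕ) (hn : 0 < n) (α : ℝ) :
    (∀ i j : Fin n, i < j →
      Bbar α i j =
        α • vecMulVec (e i + e j) (e i + e j) +
        ((1 - α) / 4) • vecMulVec (e i + e i) (e i + e i) +
        (α * (α - 1) / 4) • vecMulVec (e j + e j) (e j + e j)) ∧
    (∀ i : Fin n,
      Bbar α i i = ((1 + α) ^ 2 / 4) • vecMulVec (e i + e i) (e i + e i)) := by
  constructor
  · intro i j hij
    have hne : i ≠ j := ne_of_lt hij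
    ext a b
    simp only [Bbar, vecMulVec_apply, e, Matrix.add_apply, Matrix.smul_apply,
      Pi.add_apply, Pi.smul_apply, Pi.single_apply, smul_eq_mul]
    split_ifs <;> simp_all <;> ring
  · intro i
    ext a b
    simp only [Bbar, vecMulVec_apply, e, Matrix.smul_apply,
      Pi.add_apply, Pi.smul_apply, Pi.single_apply, smul_eq_mul]
    split_ifs <;> simp_all <;> ring
end
end

section
/- For every positive integer n and every α ∈ ℝ with α ≠ 0 and α ≠ −1, the family B̄(α) = {B̄_{i,j}(α) : 1 ≤ i ≤ j ≤ n}, consisting of n(n+1)/2 matrices, is linearly independent over ℝ and spans the space S^n of real symmetric n×n matrices; i.e., B̄(α) is a basis of S^n. -/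
open Matrix Finset

noncomputable section

/-- The expanded SD basis `B̄(α)`, as an indexed family. -/
def BbarFam (n : ℕ) (α : ℝ) : SymIdx n → Matrix (Fin n) (Fin n) ℝ :=
  fun p => Bbar α p.1.1 p.1.2

/-! Expanding the square, `B̄_{i,j}(α) = E_ii + α (E_ij + E_ji) + α² E_jj`, and
`B̄_{i,i}(α) = (1 + α)² E_ii`. Hence for `α ∉ {0, -1}` the span contains every `E_ii` and every
`E_ij + E_ji`, which span `S^n`. For independence, the `(i, j)` entry with `i < j` of a vanishing
combination isolates `α` times the coefficient of `B̄_{i,j}(α)`; once these vanish, the `(i, i)`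
entry isolates `(1 + α)²` times the coefficient of `B̄_{i,i}(α)`. -/

theorem Fintype.card_subtype_fst_le_snd (ι : Type*) [Fintype ι] [LinearOrder ι] :
    Fintype.card {p : ι × ι // p.1 ≤ p.2} = Fintype.card ι * (Fintype.card ι + 1) / 2 := by
  rw [← Fintype.card_congr Sym2.sortEquiv, Sym2.card, Nat.choose_two_right, Nat.add_sub_cancel,
    Nat.mul_comm]

theorem Matrix.IsSymm.mem_of_single_add_single_mem {ι R : Type*} [Fintype ι] [DecidableEq ι]
    [Semiring R] [Invertible (2 : R)] {S : Submodule R (Matrix ι ι R)}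
    (hS : ∀ i j, single i j 1 + single j i 1 ∈ S) {A : Matrix ι ι R} (hA : A.IsSymm) :
    A ∈ S := by
  have hsum : ∑ i, ∑ j, A i j • (single i j 1 + single j i 1) = (2 : R) • A := by
    have htranspose : ∑ i, ∑ j, single j i (A i j) = A := by
      rw [Finset.sum_comm]
      simp_rw [hA.apply]
      exact (matrix_eq_sum_single A).symm
    simp only [smul_add, Finset.sum_add_distrib, smul_single, smul_eq_mul, mul_one, htranspose,
      ← matrix_eq_sum_single, two_smul]
  have hA2 : A = ⅟(2 : R) • ∑ i, ∑ j, A i j • (single i j 1 + single j i 1) := by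
    rw [hsum, smul_smul, invOf_mul_self, one_smul]
  rw [hA2]
  exact S.smul_mem _ (S.sum_mem fun i _ => S.sum_mem fun j _ => S.smul_mem _ (hS i j))

section

variable {n : ℕ}

theorem vecMulVec_e (i j : Fin n) : vecMulVec (e i) (e j) = single i j 1 :=
  (single_eq_single_vecMulVec_single i j).symm

theorem Bbar_eq (α : ℝ) (i j : Fin n) :
    Bbar α i j = single i i 1 + α • (single i j 1 + single j i 1) + α ^ 2 • single j j 1 := by
  simp only [Bbar, add_vecMulVec, vecMulVec_add, smul_vecMulVec, vecMulVec_smul, vecMulVec_e]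
  module

theorem Bbar_self (α : ℝ) (i : Fin n) : Bbar α i i = (1 + α) ^ 2 • single i i 1 := by
  rw [Bbar_eq]
  module

theorem Bbar_apply_of_lt (α : ℝ) {k l i j : Fin n} (hkl : k ≤ l) (hij : i < j) :
    Bbar α k l i j = if k = i ∧ l = j then α else 0 := by
  have hlk : ¬ (l = i ∧ k = j) := fun ⟨hl, hk⟩ => (hl ▸ hk ▸ hkl).not_gt hij
  have hdiag : ∀ m, ¬ (m = i ∧ m = j) := fun m ⟨hi, hj⟩ => hij.ne (hi ▸ hj)
  simp [Bbar_eq, single_apply, hlk, hdiag]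

theorem isSymm_Bbar (α : ℝ) (i j : Fin n) : (Bbar α i j).IsSymm :=
  transpose_vecMulVec _ _

variable {α : ℝ}

theorem single_self_mem_span_BbarFam (h1 : α ≠ -1) (i : Fin n) :
    single i i 1 ∈ Submodule.span ℝ (Set.range (BbarFam n α)) := by
  have h1' : (1 + α) ^ 2 ≠ 0 := pow_ne_zero 2 fun h => h1 (by linarith)
  rw [← Submodule.smul_mem_iff _ h1', ← Bbar_self]
  exact Submodule.subset_span ⟨⟨(i, i), le_rfl⟩, rfl⟩

theorem single_add_single_mem_span_BbarFam (h0 : α ≠ 0) (h1 : α ≠ -1) (i j : Fin n) :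
    single i j 1 + single j i 1 ∈ Submodule.span ℝ (Set.range (BbarFam n α)) := by
  wlog hij : i ≤ j generalizing i j
  · rw [add_comm]
    exact this j i (le_of_not_ge hij)
  have hB : α • (single i j 1 + single j i 1) =
      Bbar α i j - single i i 1 - α ^ 2 • single j j 1 := by
    rw [Bbar_eq]
    abel
  rw [← Submodule.smul_mem_iff _ h0, hB]
  refine Submodule.sub_mem _ (Submodule.sub_mem _ ?_ (single_self_mem_span_BbarFam h1 i))
    (Submodule.smul_mem _ _ (single_self_mem_span_BbarFam h1 j))
  exact Submodule.subset_span ⟨⟨(i, j), hij⟩, rfl⟩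

theorem span_BbarFam (h0 : α ≠ 0) (h1 : α ≠ -1) :
    Submodule.span ℝ (Set.range (BbarFam n α)) = symmSubmodule n := by
  apply le_antisymm
  · rw [Submodule.span_le]
    rintro _ ⟨p, rfl⟩
    exact isSymm_Bbar α p.1.1 p.1.2
  · intro A hA
    exact IsSymm.mem_of_single_add_single_mem (single_add_single_mem_span_BbarFam h0 h1) hA

theorem linearIndependent_BbarFam (h0 : α ≠ 0) (h1 : α ≠ -1) :
    LinearIndependent ℝ (BbarFam n α) := by
  rw [Fintype.linearIndependent_iff]
  intro g hg
  have hentry (i j : Fin n) : ∑ q, g q * Bbar α q.1.1 q.1.2 i j = 0 := by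
    simpa [BbarFam, Matrix.sum_apply] using congr_fun₂ hg i j
  have hoff (p : SymIdx n) (hp : p.1.1 < p.1.2) : g p = 0 := by
    have hp_entry := hentry p.1.1 p.1.2
    simp only [fun q : SymIdx n => Bbar_apply_of_lt α q.2 hp, ← Prod.ext_iff, ← Subtype.ext_iff,
      mul_ite, mul_zero, Finset.sum_ite_eq', Finset.mem_univ, if_true] at hp_entry
    exact (mul_eq_zero.mp hp_entry).resolve_right h0
  intro p
  obtain hp | hp := p.2.lt_or_eq
  · exact hoff p hp
  · have hother (q : SymIdx n) (hqp : q ≠ p) : g q * Bbar α q.1.1 q.1.2 p.1.1 p.1.1 = 0 := by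
      obtain hq | hq := q.2.lt_or_eq
      · rw [hoff q hq, zero_mul]
      · have hne : q.1.1 ≠ p.1.1 := fun h =>
          hqp (Subtype.ext (Prod.ext h (by rw [← hq, ← hp, h])))
        simp [← hq, Bbar_self, hne]
    have hp_entry := hentry p.1.1 p.1.1
    rw [Finset.sum_eq_single p (fun q _ => hother q) (by simp), ← hp, Bbar_self] at hp_entry
    have h1' : 1 + α ≠ 0 := fun h => h1 (by linarith)
    simpa [single_apply, h1'] using hp_entry

end

theorem stmt11_general (n : ℕ) (α : ℝ) (h0 : α ≠ 0) (h1 : α ≠ -1) :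
    Fintype.card (SymIdx n) = n * (n + 1) / 2 ∧
    LinearIndependent ℝ (BbarFam n α) ∧
    Submodule.span ℝ (Set.range (BbarFam n α)) = symmSubmodule n := by
  refine ⟨?_, linearIndependent_BbarFam h0 h1, span_BbarFam h0 h1⟩
  simpa using Fintype.card_subtype_fst_le_snd (Fin n)

/-- for `α ∉ {0, -1}`, `B̄(α)` consists of `n(n+1)/2` matrices,
is linearly independent and spans `S^n`, i.e. it is a basis of `S^n`. -/
theorem stmt11 (n : ℕ) (hn : 0 < n) (α : ℝ) (h0 : α ≠ 0) (h1 : α ≠ -1) :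
    Fintype.card (SymIdx n) = n * (n + 1) / 2 ∧
    LinearIndependent ℝ (BbarFam n α) ∧
    Submodule.span ℝ (Set.range (BbarFam n α)) = symmSubmodule n :=
  stmt11_general n α h0 h1
end
end
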